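/- Let ω, q ∈ ℝ³ with ‖ω‖ = 1 and ξ := (−ω × q, ω) ∈ ℝ⁶, and let θ ∈ ℝ. Write exp(θ ξ̂) = [[R(θ), p(θ)], [0₁ₓ₃, 1]] and let Ad_{exp(θ ξ̂)} := [[R(θ), p̂(θ) R(θ)], [0₃ₓ₃, R(θ)]] ∈ ℝ^{6×6}. Then every entry of the map θ ↦ Ad_{exp(θ ξ̂)} is a real-linear combination of the six functions 1, sin θ, cos θ, sin²θ, sin θ cos θ, cos²θ. -/

import Mathlib

/-! Since `‖ω‖ = 1` and the translational part `-ω × q` is orthogonal to `ω`, the twist satisfies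
`ξ̂³ = -ξ̂`, so the exponential series collapses to Rodrigues' formula
`exp(θ ξ̂) = 1 + sin θ ξ̂ + (1 - cos θ) ξ̂²`. Hence the entries of `R(θ)` and of `p(θ)`, and so of
`p̂(θ)`, lie in the span of `1, sin, cos`, and the entries of `p̂(θ) R(θ)` are sums of products of two
such functions. -/

open Matrix

/-- The hat map: the unique 3×3 skew-symmetric matrix `ω̂` with `ω̂ x = ω × x` for all `x`. -/
noncomputable def hat (ω : Fin 3 → ℝ) : Matrix (Fin 3) (Fin 3) ℝ :=
  !![0, -ω 2, ω 1; ω 2, 0, -ω 0; -ω 1, ω 0, 0]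

/-- The se(3) hat map of a twist `ξ = (v, ω)`: the 4×4 matrix with upper-left block `ω̂`,
upper-right block `v` and zero bottom row. -/
noncomputable def se3hat (v ω : Fin 3 → ℝ) : Matrix (Fin 3 ⊕ Fin 1) (Fin 3 ⊕ Fin 1) ℝ :=
  Matrix.fromBlocks (hat ω) (Matrix.of fun i (_ : Fin 1) => v i) 0 0

section Rodrigues

variable {A : Type*} [Ring A] [Algebra ℝ A]

theorem pow_two_mul_add_one_of_pow_three_eq_neg {M : A} (hM : M ^ 3 = -M) (k : ℕ) :
    M ^ (2 * k + 1) = ((-1 : ℝ) ^ k) • M := by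
  induction k with
  | zero => simp
  | succ k ih =>
    rw [show 2 * (k + 1) + 1 = 2 + (2 * k + 1) by ring, pow_add, ih, mul_smul_comm,
      ← pow_succ, hM, pow_succ, mul_smul, neg_one_smul]

/-- The correction term at `k = 0` lets the even powers be summed against the cosine series. -/
theorem pow_two_mul_of_pow_three_eq_neg {M : A} (hM : M ^ 3 = -M) (k : ℕ) :
    M ^ (2 * k) = ((-1 : ℝ) ^ k) • (-M ^ 2) + if k = 0 then 1 + M ^ 2 else 0 := by
  rcases k with _ | k
  · simp
  · rw [mul_add, mul_one, pow_succ, pow_two_mul_add_one_of_pow_three_eq_neg hM, smul_mul_assoc,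
      pow_succ, mul_smul, neg_one_smul, smul_neg, if_neg k.succ_ne_zero, add_zero, sq, smul_neg,
      neg_neg]

variable [TopologicalSpace A] [IsTopologicalRing A] [ContinuousSMul ℝ A] [T2Space A]

theorem exp_smul_of_pow_three_eq_neg {M : A} (hM : M ^ 3 = -M) (θ : ℝ) :
    NormedSpace.exp (θ • M) = 1 + Real.sin θ • M + (1 - Real.cos θ) • M ^ 2 := by
  let f (n : ℕ) : A := (θ ^ n / n.factorial) • M ^ n
  have hodd : HasSum (fun k => f (2 * k + 1)) (Real.sin θ • M) := by
    refine ((Real.hasSum_sin θ).smul_const M).congr_fun fun k => ?_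
    simp only [f, pow_two_mul_add_one_of_pow_three_eq_neg hM, smul_smul]
    ring_nf
  have heven : HasSum (fun k => f (2 * k)) (Real.cos θ • (-M ^ 2) + (1 + M ^ 2)) := by
    refine (((Real.hasSum_cos θ).smul_const _).add (hasSum_ite_eq 0 _)).congr_fun fun k => ?_
    simp only [f, pow_two_mul_of_pow_three_eq_neg hM, smul_add, smul_smul, smul_ite, smul_zero]
    rcases k with _ | k
    · simp
    · simp only [Nat.add_one_ne_zero, if_false, add_zero]
      ring_nf
  have hexp : NormedSpace.exp (θ • M) = ∑' n, f n := by
    simp only [NormedSpace.exp_eq_tsum ℝ, f, smul_pow, smul_smul, div_eq_inv_mul]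
  rw [hexp, (heven.even_add_odd hodd).tsum_eq]
  module

end Rodrigues

section Blocks

variable {n m : Type*} [Fintype n] [Fintype m] [DecidableEq n] [DecidableEq m]

theorem fromBlocks_zero_zero_pow_succ {α : Type*} [Ring α] (A : Matrix n n α) (B : Matrix n m α)
    (k : ℕ) : fromBlocks A B (0 : Matrix m n α) 0 ^ (k + 1) = fromBlocks (A ^ (k + 1)) (A ^ k * B) 0 0 := by
  induction k with
  | zero => simp
  | succ k ih =>
    rw [pow_succ', ih, fromBlocks_multiply]
    simp [pow_succ', Matrix.mul_assoc]

theorem exp_smul_fromBlocks_zero_zero {A : Matrix n n ℝ} {B : Matrix n m ℝ} (hA : A ^ 3 = -A)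
    (hB : A ^ 2 * B = -B) (θ : ℝ) :
    NormedSpace.exp (θ • fromBlocks A B (0 : Matrix m n ℝ) 0) =
      fromBlocks (1 + Real.sin θ • A + (1 - Real.cos θ) • A ^ 2)
        (Real.sin θ • B + (1 - Real.cos θ) • (A * B)) 0 1 := by
  have hM : fromBlocks A B (0 : Matrix m n ℝ) 0 ^ 3 = -fromBlocks A B 0 0 := by
    rw [fromBlocks_zero_zero_pow_succ, hA, hB, fromBlocks_neg, neg_zero, neg_zero]
  rw [exp_smul_of_pow_three_eq_neg hM, fromBlocks_zero_zero_pow_succ, pow_one, ← fromBlocks_one,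
    fromBlocks_smul, fromBlocks_smul, fromBlocks_add, fromBlocks_add]
  simp

end Blocks

section Hat

theorem hat_mulVec (ω x : Fin 3 → ℝ) : hat ω *ᵥ x = ω ⨯₃ x := by
  ext i
  fin_cases i <;> simp [hat, cross_apply, mulVec, dotProduct, Fin.sum_univ_three] <;> ring

theorem hat_add (x y : Fin 3 → ℝ) : hat (x + y) = hat x + hat y := by
  ext i j
  fin_cases i <;> fin_cases j <;> simp [hat] <;> ring

theorem hat_smul (c : ℝ) (x : Fin 3 → ℝ) : hat (c • x) = c • hat x := by
  ext i j
  fin_cases i <;> fin_cases j <;> simp [hat]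

theorem hat_sq_mulVec (ω x : Fin 3 → ℝ) : hat ω ^ 2 *ᵥ x = (ω ⬝ᵥ x) • ω - (ω ⬝ᵥ ω) • x := by
  rw [sq, ← mulVec_mulVec, hat_mulVec, hat_mulVec, cross_cross_eq_smul_sub_smul']

theorem hat_pow_three (ω : Fin 3 → ℝ) : hat ω ^ 3 = -(ω ⬝ᵥ ω) • hat ω := by
  refine mulVec_injective (funext fun x => ?_)
  rw [pow_succ, ← mulVec_mulVec, hat_sq_mulVec, hat_mulVec, dot_self_cross, zero_smul, zero_sub,
    neg_smul, neg_mulVec, smul_mulVec, hat_mulVec]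

theorem exp_smul_se3hat {v ω : Fin 3 → ℝ} (hω : ω ⬝ᵥ ω = 1) (hv : ω ⬝ᵥ v = 0) (θ : ℝ) :
    NormedSpace.exp (θ • se3hat v ω) =
      fromBlocks (1 + Real.sin θ • hat ω + (1 - Real.cos θ) • hat ω ^ 2)
        (replicateCol (Fin 1) (Real.sin θ • v + (1 - Real.cos θ) • (ω ⨯₃ v))) 0 1 := by
  have hA : hat ω ^ 3 = -hat ω := by rw [hat_pow_three, hω, neg_one_smul]
  have hB : hat ω ^ 2 * replicateCol (Fin 1) v = -replicateCol (Fin 1) v := by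
    rw [← replicateCol_mulVec, hat_sq_mulVec, hv, hω, zero_smul, one_smul, zero_sub]
    rfl
  rw [se3hat, show (of fun i (_ : Fin 1) => v i) = replicateCol (Fin 1) v from rfl,
    exp_smul_fromBlocks_zero_zero hA hB, ← replicateCol_mulVec, hat_mulVec, ← replicateCol_smul,
    ← replicateCol_smul, ← replicateCol_add]

end Hat

theorem Submodule.matrix_mul_apply_mem_mul {R X l n m : Type*} [CommSemiring R] [Fintype n]
    {S T : Submodule R (X → R)} {F : X → Matrix l n R} {G : X → Matrix n m R}
    (hF : ∀ i k, (fun x => F x i k) ∈ S) (hG : ∀ k j, (fun x => G x k j) ∈ T) (i : l) (j : m) :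
    (fun x => (F x * G x) i j) ∈ S * T := by
  have h : (fun x => (F x * G x) i j) = ∑ k, (fun x => F x i k) * (fun x => G x k j) := by
    ext x
    simp [mul_apply]
  rw [h]
  exact Submodule.sum_mem _ fun k _ => Submodule.mul_mem_mul (hF i k) (hG k j)

section TrigSpan

def trigLinear : Submodule ℝ (ℝ → ℝ) :=
  Submodule.span ℝ {fun _ => 1, Real.sin, Real.cos}

def trigQuadratic : Submodule ℝ (ℝ → ℝ) :=
  Submodule.span ℝ {fun _ => 1, Real.sin, Real.cos, fun θ => Real.sin θ ^ 2,
    fun θ => Real.sin θ * Real.cos θ, fun θ => Real.cos θ ^ 2}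

theorem trigLinear_le_trigQuadratic : trigLinear ≤ trigQuadratic :=
  Submodule.span_mono (by intro f; simp only [Set.mem_insert_iff]; tauto)

theorem trigLinear_mul_trigLinear_le : trigLinear * trigLinear ≤ trigQuadratic := by
  rw [trigLinear, Submodule.span_mul_span, Submodule.span_le]
  rintro _ ⟨f, hf, g, hg, rfl⟩
  refine Submodule.subset_span ?_
  simp only [Set.mem_insert_iff, Set.mem_singleton_iff] at hf hg ⊢
  rcases hf with rfl | rfl | rfl <;> rcases hg with rfl | rfl | rfl <;>
    simp [funext_iff, sq, mul_comm]

theorem rodrigues_apply_mem_trigLinear {l k : Type*} (A B C : Matrix l k ℝ) (i : l) (j : k) :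
    (fun θ => (A + Real.sin θ • B + (1 - Real.cos θ) • C) i j) ∈ trigLinear := by
  have h : (fun θ => (A + Real.sin θ • B + (1 - Real.cos θ) • C) i j) =
      (A i j + C i j) • (fun _ => 1) + B i j • Real.sin + (-C i j) • Real.cos := by
    ext θ
    simp only [Matrix.add_apply, Matrix.smul_apply, smul_eq_mul, Pi.add_apply, Pi.smul_apply]
    ring
  rw [h]
  refine add_mem (add_mem ?_ ?_) ?_ <;>
    exact Submodule.smul_mem _ _ (Submodule.subset_span (by simp))

end TrigSpan

/-- For a zero-pitch revolute twist `ξ = (−ω × q, ω)` with `‖ω‖ = 1`, writing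
`exp(θ ξ̂) = [[R(θ), p(θ)], [0, 1]]`, every entry of the Adjoint matrix
`Ad_{exp(θ ξ̂)} = [[R(θ), p̂(θ) R(θ)], [0, R(θ)]]` is a real-linear combination of
`1, sin θ, cos θ, sin²θ, sin θ cos θ, cos²θ`. -/
theorem adjoint_exp_trig (ω : EuclideanSpace ℝ (Fin 3)) (q : Fin 3 → ℝ) (hω : ‖ω‖ = 1)
    (R : ℝ → Matrix (Fin 3) (Fin 3) ℝ) (p : ℝ → Fin 3 → ℝ)
    (hRp : ∀ θ : ℝ, NormedSpace.exp (θ • se3hat (-(crossProduct ω q)) ω) =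
      Matrix.fromBlocks (R θ) (Matrix.of fun i (_ : Fin 1) => p θ i) 0 1) :
    ∀ a b : Fin 3 ⊕ Fin 3,
      (fun θ : ℝ =>
          (Matrix.fromBlocks (R θ) (hat (p θ) * R θ) 0 (R θ)) a b) ∈
        Submodule.span ℝ
          ({fun _ => 1, Real.sin, Real.cos, fun θ => Real.sin θ ^ 2,
            fun θ => Real.sin θ * Real.cos θ, fun θ => Real.cos θ ^ 2} :
            Set (ℝ → ℝ)) := by
  set v := -(crossProduct ω q)
  have hωω : ω ⬝ᵥ ω = 1 := by
    rw [← one_pow 2, ← hω, ← real_inner_self_eq_norm_sq, EuclideanSpace.inner_eq_star_dotProduct]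
    simp
  have hωv : ω ⬝ᵥ v = 0 := by rw [dotProduct_neg, dot_self_cross, neg_zero]
  have hblocks θ := (hRp θ).symm.trans (exp_smul_se3hat hωω hωv θ)
  have hR θ : R θ = 1 + Real.sin θ • hat ω + (1 - Real.cos θ) • hat ω ^ 2 :=
    (fromBlocks_inj.mp (hblocks θ)).1
  have hp θ : hat (p θ) = 0 + Real.sin θ • hat v + (1 - Real.cos θ) • hat (ω ⨯₃ v) := by
    have h := (fromBlocks_inj.mp (hblocks θ)).2.1
    rw [show (of fun i (_ : Fin 1) => p θ i) = replicateCol (Fin 1) (p θ) from rfl,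
      replicateCol_inj] at h
    rw [h, hat_add, hat_smul, hat_smul, zero_add]
  have hRmem i j : (fun θ => R θ i j) ∈ trigLinear := by
    simp_rw [hR]
    exact rodrigues_apply_mem_trigLinear _ _ _ i j
  have hpmem i j : (fun θ => hat (p θ) i j) ∈ trigLinear := by
    simp_rw [hp]
    exact rodrigues_apply_mem_trigLinear _ _ _ i j
  rintro (i | i) (j | j)
  · exact trigLinear_le_trigQuadratic (hRmem i j)
  · exact trigLinear_mul_trigLinear_le (Submodule.matrix_mul_apply_mem_mul hpmem hRmem i j)
  · exact zero_mem trigQuadratic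
  · exact trigLinear_le_trigQuadratic (hRmem i j)
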